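/- arXiv:1411.5572 — 5 statements merged into one kernel-verified Lean document; each statement's English description precedes it below -/
import Mathlib

section
/- Let x₀, y₀, z₀, t₀, ξ¹, ξ², ξ³, ξ⁴ be real numbers with ξ³ ≠ 0, and set ω = √2·ξ³. Define x(s) = x₀ + (2t₀ξ³ − ξ¹)s + (ξ⁴/ξ³)(1 − cos(ωs)) + (√2(ξ¹ − t₀ξ³)/ξ³)·sin(ωs); y(s) = y₀ + [ξ² + ((ξ⁴)² + 2(ξ¹)²)/(2ξ³) + t₀(3t₀ξ³ − 4ξ¹)]·s + (ξ⁴/(2(ξ³)²))·[2(ξ¹ − 2t₀ξ³)cos(ωs) − (ξ¹ − t₀ξ³)cos(2ωs) − (ξ¹ − 3t₀ξ³)] − (√2/(ξ³)²)·[(ξ¹)² − t₀ξ³(3ξ¹ − 2t₀ξ³)]·sin(ωs) + (1/(2√2(ξ³)²))·[(ξ¹)² − (ξ⁴)²/2 − t₀ξ³(2ξ¹ − t₀ξ³)]·sin(2ωs); z(s) = z₀ + ξ³s; t(s) = t₀(2 − cos(ωs)) − (ξ¹/ξ³)(1 − cos(ωs)) + (ξ⁴/(√2ξ³))·sin(ωs).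 Then (x, y, z, t) satisfies the basic anti-Mach geodesic system x″ = 2z′t′, y″ = 2x′t′, z″ = 0, t″ = 2t(z′)² − 2x′z′ on all of ℝ, with x(0) = x₀, y(0) = y₀, z(0) = z₀, t(0) = t₀, x′(0) = ξ¹, y′(0) = ξ², z′(0) = ξ³, t′(0) = ξ⁴. -/
noncomputable def canonF (ω A B C D E F : ℝ) : ℝ → ℝ := fun s =>
  A + B * s + C * Real.cos (ω * s) + D * Real.sin (ω * s)
    + E * Real.cos (2 * ω * s) + F * Real.sin (2 * ω * s)

lemma canon_hasDerivAt (ω A B C D E F s : ℝ) :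
    HasDerivAt (canonF ω A B C D E F)
      (canonF ω B 0 (D * ω) (-(C * ω)) (F * (2 * ω)) (-(E * (2 * ω))) s) s := by
  have h1 : HasDerivAt (fun u : ℝ => ω * u) ω s := by
    simpa using (hasDerivAt_id s).const_mul ω
  have h2 : HasDerivAt (fun u : ℝ => 2 * ω * u) (2 * ω) s := by
    simpa using (hasDerivAt_id s).const_mul (2 * ω)
  have hc := (Real.hasDerivAt_cos (ω * s)).comp s h1
  have hs := (Real.hasDerivAt_sin (ω * s)).comp s h1
  have hc2 := (Real.hasDerivAt_cos (2 * ω * s)).comp s h2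
  have hs2 := (Real.hasDerivAt_sin (2 * ω * s)).comp s h2
  have H := (((((hasDerivAt_const s A).add ((hasDerivAt_id s).const_mul B)).add
    (hc.const_mul C)).add (hs.const_mul D)).add (hc2.const_mul E)).add (hs2.const_mul F)
  convert H using 1
  case e'_4 => rfl
  case e'_5 => rfl
  case e'_8 => rfl
  simp only [canonF]
  ring

lemma deriv_of_eq_canon {f : ℝ → ℝ} (ω A B C D E F : ℝ)
    (hf : ∀ s, f s = canonF ω A B C D E F s) :
    ∀ s, deriv f s = canonF ω B 0 (D * ω) (-(C * ω)) (F * (2 * ω)) (-(E * (2 * ω))) s := by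
  have hfe : f = canonF ω A B C D E F := funext hf
  intro s
  rw [hfe, (canon_hasDerivAt ω A B C D E F s).deriv]

set_option maxHeartbeats 1600000 in
/-- Explicit solution of the basic anti-Mach geodesic system in the case ξ³ ≠ 0. -/
theorem antiMach_geodesic_solution_base (x₀ y₀ z₀ t₀ ξ1 ξ2 ξ3 ξ4 ω : ℝ) (hξ3 : ξ3 ≠ 0)
    (hω : ω = Real.sqrt 2 * ξ3)
    (x y z t : ℝ → ℝ)
    (hx : ∀ s, x s = x₀ + (2 * t₀ * ξ3 - ξ1) * s + (ξ4 / ξ3) * (1 - Real.cos (ω * s))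
      + (Real.sqrt 2 * (ξ1 - t₀ * ξ3) / ξ3) * Real.sin (ω * s))
    (hy : ∀ s, y s = y₀ + (ξ2 + (ξ4 ^ 2 + 2 * ξ1 ^ 2) / (2 * ξ3)
        + t₀ * (3 * t₀ * ξ3 - 4 * ξ1)) * s
      + (ξ4 / (2 * ξ3 ^ 2)) * (2 * (ξ1 - 2 * t₀ * ξ3) * Real.cos (ω * s)
        - (ξ1 - t₀ * ξ3) * Real.cos (2 * ω * s) - (ξ1 - 3 * t₀ * ξ3))
      - (Real.sqrt 2 / ξ3 ^ 2) * (ξ1 ^ 2 - t₀ * ξ3 * (3 * ξ1 - 2 * t₀ * ξ3))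
        * Real.sin (ω * s)
      + (1 / (2 * Real.sqrt 2 * ξ3 ^ 2))
        * (ξ1 ^ 2 - ξ4 ^ 2 / 2 - t₀ * ξ3 * (2 * ξ1 - t₀ * ξ3)) * Real.sin (2 * ω * s))
    (hz : ∀ s, z s = z₀ + ξ3 * s)
    (ht : ∀ s, t s = t₀ * (2 - Real.cos (ω * s)) - (ξ1 / ξ3) * (1 - Real.cos (ω * s))
      + (ξ4 / (Real.sqrt 2 * ξ3)) * Real.sin (ω * s)) :
    (∀ s, deriv (deriv x) s = 2 * deriv z s * deriv t s) ∧
    (∀ s, deriv (deriv y) s = 2 * deriv x s * deriv t s) ∧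
    (∀ s, deriv (deriv z) s = 0) ∧
    (∀ s, deriv (deriv t) s = 2 * t s * (deriv z s) ^ 2 - 2 * deriv x s * deriv z s) ∧
    x 0 = x₀ ∧ y 0 = y₀ ∧ z 0 = z₀ ∧ t 0 = t₀ ∧
    deriv x 0 = ξ1 ∧ deriv y 0 = ξ2 ∧ deriv z 0 = ξ3 ∧ deriv t 0 = ξ4 := by
  subst hω
  have hr : Real.sqrt 2 * Real.sqrt 2 = 2 := Real.mul_self_sqrt (by norm_num)
  have hrne : Real.sqrt 2 ≠ 0 := by positivity
  have hir : Real.sqrt 2 * (Real.sqrt 2)⁻¹ = 1 := mul_inv_cancel₀ hrne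
  have h3 : ξ3 * ξ3⁻¹ = 1 := mul_inv_cancel₀ hξ3
  have hxc : ∀ s, x s = canonF (Real.sqrt 2 * ξ3) (((1:ℝ) * x₀) + ((1:ℝ) * ξ3⁻¹ * ξ4)) (((-1:ℝ) * ξ1) + ((2:ℝ) * ξ3 * t₀)) (((-1:ℝ) * ξ3⁻¹ * ξ4)) (((1:ℝ) * Real.sqrt 2 * ξ3⁻¹ * ξ1) + ((-1:ℝ) * Real.sqrt 2 * ξ3 * ξ3⁻¹ * t₀)) (0) (0) s := by
    intro s
    rw [hx]
    unfold canonF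
    field_simp
    try ring
  have hdx := deriv_of_eq_canon _ _ _ _ _ _ _ hxc
  have hddx := deriv_of_eq_canon _ _ _ _ _ _ _ hdx
  have hyc : ∀ s, y s = canonF (Real.sqrt 2 * ξ3) (((1:ℝ) * y₀) + (((-1:ℝ)/2) * ξ3⁻¹ * ξ3⁻¹ * ξ1 * ξ4) + (((3:ℝ)/2) * ξ3 * ξ3⁻¹ * ξ3⁻¹ * ξ4 * t₀)) (((1:ℝ) * ξ2) + ((-4:ℝ) * ξ1 * t₀) + (((1:ℝ)/2) * ξ3⁻¹ * ξ4 * ξ4) + ((1:ℝ) * ξ3⁻¹ * ξ1 * ξ1) + ((3:ℝ) * ξ3 * t₀ * t₀)) (((1:ℝ) * ξ3⁻¹ * ξ3⁻¹ * ξ1 * ξ4) + ((-2:ℝ) * ξ3 * ξ3⁻¹ * ξ3⁻¹ * ξ4 * t₀)) (((-1:ℝ) * Real.sqrt 2 * ξ3⁻¹ * ξ3⁻¹ * ξ1 * ξ1) + ((3:ℝ) * Real.sqrt 2 * ξ3 * ξ3⁻¹ * ξ3⁻¹ * ξ1 * t₀) + ((-2:ℝ) * Real.sqrt 2 * ξ3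 * ξ3 * ξ3⁻¹ * ξ3⁻¹ * t₀ * t₀)) ((((-1:ℝ)/2) * ξ3⁻¹ * ξ3⁻¹ * ξ1 * ξ4) + (((1:ℝ)/2) * ξ3 * ξ3⁻¹ * ξ3⁻¹ * ξ4 * t₀)) ((((-1:ℝ)/4) * (Real.sqrt 2)⁻¹ * ξ3⁻¹ * ξ3⁻¹ * ξ4 * ξ4) + (((1:ℝ)/2) * (Real.sqrt 2)⁻¹ * ξ3⁻¹ * ξ3⁻¹ * ξ1 * ξ1) + ((-1:ℝ) * (Real.sqrt 2)⁻¹ * ξ3 * ξ3⁻¹ * ξ3⁻¹ * ξ1 * t₀) + (((1:ℝ)/2) * (Real.sqrt 2)⁻¹ * ξ3 * ξ3 * ξ3⁻¹ * ξ3⁻¹ * t₀ * t₀)) s := by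
    intro s
    rw [hy]
    unfold canonF
    field_simp
    try ring
  have hdy := deriv_of_eq_canon _ _ _ _ _ _ _ hyc
  have hddy := deriv_of_eq_canon _ _ _ _ _ _ _ hdy
  have hzc : ∀ s, z s = canonF (Real.sqrt 2 * ξ3) (((1:ℝ) * z₀)) (((1:ℝ) * ξ3)) (0) (0) (0) (0) s := by
    intro s
    rw [hz]
    unfold canonF
    field_simp
    try ring
  have hdz := deriv_of_eq_canon _ _ _ _ _ _ _ hzc
  have hddz := deriv_of_eq_canon _ _ _ _ _ _ _ hdz
  have htc : ∀ s, t s = canonF (Real.sqrt 2 * ξ3) (((2:ℝ) * t₀) + ((-1:ℝ) * ξ3⁻¹ * ξ1)) (0) (((-1:ℝ) * t₀) + ((1:ℝ) * ξ3⁻¹ * ξ1)) (((1:ℝ) * (Real.sqrt 2)⁻¹ * ξ3⁻¹ * ξ4)) (0) (0) s := by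
    intro s
    rw [ht]
    unfold canonF
    field_simp
    try ring
  have hdt := deriv_of_eq_canon _ _ _ _ _ _ _ htc
  have hddt := deriv_of_eq_canon _ _ _ _ _ _ _ hdt
  have hsc : ∀ s : ℝ, Real.sin (Real.sqrt 2 * ξ3 * s) ^ 2 + Real.cos (Real.sqrt 2 * ξ3 * s) ^ 2 = 1 :=
    fun s => Real.sin_sq_add_cos_sq _
  have hS2 : ∀ s : ℝ, Real.sin (2 * (Real.sqrt 2 * ξ3) * s)
      = 2 * Real.sin (Real.sqrt 2 * ξ3 * s) * Real.cos (Real.sqrt 2 * ξ3 * s) := by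
    intro s; rw [mul_assoc]; exact Real.sin_two_mul _
  have hC2 : ∀ s : ℝ, Real.cos (2 * (Real.sqrt 2 * ξ3) * s)
      = 2 * Real.cos (Real.sqrt 2 * ξ3 * s) ^ 2 - 1 := by
    intro s; rw [mul_assoc]; exact Real.cos_two_mul _
  refine ⟨?_, ?_, ?_, ?_, ?_, ?_, ?_, ?_, ?_, ?_, ?_, ?_⟩
  · intro s
    rw [hddx s, hdz s, hdt s]
    unfold canonF
    simp only [hS2 s, hC2 s]
    linear_combination (((-1:ℝ) * Real.sqrt 2 * ξ3 * ξ3 * ξ3⁻¹ * Real.sin (Real.sqrt 2 * ξ3 * s) * ξ1) + ((1:ℝ) * Real.sqrt 2 * ξ3 * ξ3 * ξ3 * ξ3⁻¹ * Real.sin (Real.sqrt 2 * ξ3 * s) * t₀) + ((1:ℝ) * Real.sqrt 2 * (Real.sqrt 2)⁻¹ * ξ3 * ξ3 * ξ3⁻¹ * Real.cos (Real.sqrt 2 * ξ3 * s) * ξ4)) * hr + (((2:ℝ) * Real.sqrt 2 * ξ3 * ξ3 * Real.sin (Real.sqrt 2 * ξ3 * s) * t₀)) * h3 + (((-1:ℝ)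 * Real.sqrt 2 * Real.sqrt 2 * ξ3 * ξ3 * ξ3⁻¹ * Real.cos (Real.sqrt 2 * ξ3 * s) * ξ4)) * hir
  · intro s
    rw [hddy s, hdx s, hdt s]
    unfold canonF
    simp only [hS2 s, hC2 s]
    linear_combination (((1:ℝ) * ξ3 * ξ3⁻¹ * Real.cos (Real.sqrt 2 * ξ3 * s) * ξ1 * ξ4) + ((-2:ℝ) * ξ3 * ξ3 * ξ3⁻¹ * Real.cos (Real.sqrt 2 * ξ3 * s) * ξ4 * t₀) + ((-2:ℝ) * ξ3 * ξ3 * ξ3⁻¹ * Real.sin (Real.sqrt 2 * ξ3 * s) * Real.sin (Real.sqrt 2 * ξ3 * s) * ξ4 * t₀) + ((-2:ℝ) * ξ3 * ξ3 * ξ3⁻¹ * ξ3⁻¹ * ξ1 * ξ4) + ((-1:ℝ) * ξ3 * ξ3 * ξ3⁻¹ * ξ3⁻¹ * Real.cos (Real.sqrt 2 * ξ3 * s) * ξ1 * ξ4) + ((2:ℝ) * ξ3 * ξ3 * ξ3⁻¹ * ξ3⁻¹ * Real.cos (Real.sqrt 2 * ξ3 * s) * Real.cos (Real.sqrt 2 *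 ξ3 * s) * ξ1 * ξ4) + ((2:ℝ) * ξ3 * ξ3 * ξ3⁻¹ * ξ3⁻¹ * Real.sin (Real.sqrt 2 * ξ3 * s) * Real.sin (Real.sqrt 2 * ξ3 * s) * ξ1 * ξ4) + ((2:ℝ) * ξ3 * ξ3 * ξ3 * ξ3⁻¹ * ξ3⁻¹ * ξ4 * t₀) + ((2:ℝ) * ξ3 * ξ3 * ξ3 * ξ3⁻¹ * ξ3⁻¹ * Real.cos (Real.sqrt 2 * ξ3 * s) * ξ4 * t₀) + ((-2:ℝ) * ξ3 * ξ3 * ξ3 * ξ3⁻¹ * ξ3⁻¹ * Real.cos (Real.sqrt 2 * ξ3 * s) * Real.cos (Real.sqrt 2 * ξ3 * s) * ξ4 * t₀) + ((-2:ℝ) * Real.sqrt 2 * ξ3 * ξ3 * ξ3⁻¹ * Real.sin (Real.sqrt 2 * ξ3 * s) * Real.cos (Real.sqrt 2 * ξ3 * s) * ξ1 * t₀) + ((1:ℝ) * Real.sqrt 2 * ξ3 * ξ3 * ξ3⁻¹ * ξ3⁻¹ * Real.sin (Real.sqrt 2 * ξ3 * s) * ξ1 * ξ1) + ((2:ℝ)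 * Real.sqrt 2 * ξ3 * ξ3 * ξ3 * ξ3⁻¹ * Real.sin (Real.sqrt 2 * ξ3 * s) * Real.cos (Real.sqrt 2 * ξ3 * s) * t₀ * t₀) + ((-3:ℝ) * Real.sqrt 2 * ξ3 * ξ3 * ξ3 * ξ3⁻¹ * ξ3⁻¹ * Real.sin (Real.sqrt 2 * ξ3 * s) * ξ1 * t₀) + ((2:ℝ) * Real.sqrt 2 * ξ3 * ξ3 * ξ3 * ξ3⁻¹ * ξ3⁻¹ * Real.sin (Real.sqrt 2 * ξ3 * s) * Real.cos (Real.sqrt 2 * ξ3 * s) * ξ1 * t₀) + ((2:ℝ) * Real.sqrt 2 * ξ3 * ξ3 * ξ3 * ξ3 * ξ3⁻¹ * ξ3⁻¹ * Real.sin (Real.sqrt 2 * ξ3 * s) * t₀ * t₀) + ((-2:ℝ) * Real.sqrt 2 * ξ3 * ξ3 * ξ3 * ξ3 * ξ3⁻¹ * ξ3⁻¹ * Real.sin (Real.sqrt 2 * ξ3 * s) * Real.cos (Real.sqrt 2 * ξ3 * s) * t₀ * t₀) + ((-1:ℝ) * Real.sqrt 2 * (Real.sqrt 2)⁻¹ *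 ξ3 * ξ3⁻¹ * Real.cos (Real.sqrt 2 * ξ3 * s) * ξ1 * ξ4) + ((2:ℝ) * Real.sqrt 2 * (Real.sqrt 2)⁻¹ * ξ3 * ξ3 * ξ3⁻¹ * Real.cos (Real.sqrt 2 * ξ3 * s) * ξ4 * t₀) + ((-1:ℝ) * Real.sqrt 2 * Real.sqrt 2 * ξ3 * ξ3 * ξ3⁻¹ * ξ3⁻¹ * Real.cos (Real.sqrt 2 * ξ3 * s) * Real.cos (Real.sqrt 2 * ξ3 * s) * ξ1 * ξ4) + ((1:ℝ) * Real.sqrt 2 * Real.sqrt 2 * ξ3 * ξ3 * ξ3 * ξ3⁻¹ * ξ3⁻¹ * Real.cos (Real.sqrt 2 * ξ3 * s) * Real.cos (Real.sqrt 2 * ξ3 * s) * ξ4 * t₀) + ((2:ℝ) * Real.sqrt 2 * Real.sqrt 2 * (Real.sqrt 2)⁻¹ * ξ3 * ξ3 * ξ3⁻¹ * ξ3⁻¹ * Real.sin (Real.sqrt 2 * ξ3 * s) * Real.cos (Real.sqrt 2 * ξ3 * s) * ξ1 * ξ1) + ((-4:ℝ) * Real.sqrt 2 * Real.sqrt 2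 * (Real.sqrt 2)⁻¹ * ξ3 * ξ3 * ξ3 * ξ3⁻¹ * ξ3⁻¹ * Real.sin (Real.sqrt 2 * ξ3 * s) * Real.cos (Real.sqrt 2 * ξ3 * s) * ξ1 * t₀) + ((2:ℝ) * Real.sqrt 2 * Real.sqrt 2 * (Real.sqrt 2)⁻¹ * ξ3 * ξ3 * ξ3 * ξ3 * ξ3⁻¹ * ξ3⁻¹ * Real.sin (Real.sqrt 2 * ξ3 * s) * Real.cos (Real.sqrt 2 * ξ3 * s) * t₀ * t₀) + ((1:ℝ) * Real.sqrt 2 * Real.sqrt 2 * Real.sqrt 2 * (Real.sqrt 2)⁻¹ * ξ3 * ξ3 * ξ3⁻¹ * ξ3⁻¹ * Real.cos (Real.sqrt 2 * ξ3 * s) * Real.cos (Real.sqrt 2 * ξ3 * s) * ξ1 * ξ4) + ((-1:ℝ) * Real.sqrt 2 * Real.sqrt 2 * Real.sqrt 2 * (Real.sqrt 2)⁻¹ * ξ3 * ξ3 * ξ3 * ξ3⁻¹ * ξ3⁻¹ * Real.cos (Real.sqrt 2 * ξ3 * s) * Real.cos (Real.sqrt 2 * ξ3 * s) * ξ4 *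 t₀)) * hr + (((-4:ℝ) * ξ3 * ξ3 * ξ3⁻¹ * ξ4 * t₀) + ((4:ℝ) * ξ3 * ξ3 * ξ3⁻¹ * ξ3⁻¹ * ξ1 * ξ4)) * (hsc s) + (((-2:ℝ) * ξ3 * ξ3⁻¹ * Real.cos (Real.sqrt 2 * ξ3 * s) * ξ1 * ξ4) + ((4:ℝ) * ξ3 * ξ3 * ξ3⁻¹ * ξ4 * t₀) + ((4:ℝ) * ξ3 * ξ3 * ξ3⁻¹ * Real.cos (Real.sqrt 2 * ξ3 * s) * ξ4 * t₀) + ((-4:ℝ) * ξ3 * ξ3 * ξ3⁻¹ * Real.cos (Real.sqrt 2 * ξ3 * s) * Real.cos (Real.sqrt 2 * ξ3 * s) * ξ4 * t₀) + ((-2:ℝ) * Real.sqrt 2 * ξ3 * Real.sin (Real.sqrt 2 * ξ3 * s) * ξ1 * t₀) + ((2:ℝ) * Real.sqrt 2 * ξ3 * ξ3⁻¹ * Real.sin (Real.sqrt 2 * ξ3 * s) * ξ1 * ξ1) + ((4:ℝ) * Real.sqrt 2 * ξ3 * ξ3 * Real.sin (Real.sqrt 2 * ξ3 * s) * t₀ *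 t₀) + ((-6:ℝ) * Real.sqrt 2 * ξ3 * ξ3 * ξ3⁻¹ * Real.sin (Real.sqrt 2 * ξ3 * s) * ξ1 * t₀) + ((4:ℝ) * Real.sqrt 2 * ξ3 * ξ3 * ξ3⁻¹ * Real.sin (Real.sqrt 2 * ξ3 * s) * Real.cos (Real.sqrt 2 * ξ3 * s) * ξ1 * t₀) + ((4:ℝ) * Real.sqrt 2 * ξ3 * ξ3 * ξ3 * ξ3⁻¹ * Real.sin (Real.sqrt 2 * ξ3 * s) * t₀ * t₀) + ((-4:ℝ) * Real.sqrt 2 * ξ3 * ξ3 * ξ3 * ξ3⁻¹ * Real.sin (Real.sqrt 2 * ξ3 * s) * Real.cos (Real.sqrt 2 * ξ3 * s) * t₀ * t₀)) * h3 + (((1:ℝ) * Real.sqrt 2 * Real.sqrt 2 * ξ3 * ξ3⁻¹ * Real.cos (Real.sqrt 2 * ξ3 * s) * ξ1 * ξ4) + ((-2:ℝ) * Real.sqrt 2 * Real.sqrt 2 * ξ3 * ξ3 * ξ3⁻¹ * Real.cos (Real.sqrt 2 * ξ3 * s) * ξ4 * t₀) + ((-2:ℝ) * Real.sqrt 2 *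 Real.sqrt 2 * Real.sqrt 2 * ξ3 * ξ3 * ξ3⁻¹ * ξ3⁻¹ * Real.sin (Real.sqrt 2 * ξ3 * s) * Real.cos (Real.sqrt 2 * ξ3 * s) * ξ1 * ξ1) + ((4:ℝ) * Real.sqrt 2 * Real.sqrt 2 * Real.sqrt 2 * ξ3 * ξ3 * ξ3 * ξ3⁻¹ * ξ3⁻¹ * Real.sin (Real.sqrt 2 * ξ3 * s) * Real.cos (Real.sqrt 2 * ξ3 * s) * ξ1 * t₀) + ((-2:ℝ) * Real.sqrt 2 * Real.sqrt 2 * Real.sqrt 2 * ξ3 * ξ3 * ξ3 * ξ3 * ξ3⁻¹ * ξ3⁻¹ * Real.sin (Real.sqrt 2 * ξ3 * s) * Real.cos (Real.sqrt 2 * ξ3 * s) * t₀ * t₀) + ((-1:ℝ) * Real.sqrt 2 * Real.sqrt 2 * Real.sqrt 2 * Real.sqrt 2 * ξ3 * ξ3 * ξ3⁻¹ * ξ3⁻¹ * Real.cos (Real.sqrt 2 * ξ3 * s) * Real.cos (Real.sqrt 2 * ξ3 * s) * ξ1 * ξ4) + ((1:ℝ) * Real.sqrt 2 * Real.sqrt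 2 * Real.sqrt 2 * Real.sqrt 2 * ξ3 * ξ3 * ξ3 * ξ3⁻¹ * ξ3⁻¹ * Real.cos (Real.sqrt 2 * ξ3 * s) * Real.cos (Real.sqrt 2 * ξ3 * s) * ξ4 * t₀)) * hir
  · intro s
    rw [hddz s]
    unfold canonF
    simp only [hS2 s, hC2 s]
    linear_combination 0
  · intro s
    rw [hddt s, htc s, hdx s, hdz s]
    unfold canonF
    simp only [hS2 s, hC2 s]
    linear_combination (((1:ℝ) * ξ3 * ξ3 * Real.cos (Real.sqrt 2 * ξ3 * s) * t₀) + ((1:ℝ) * ξ3 * ξ3 * ξ3⁻¹ * Real.cos (Real.sqrt 2 * ξ3 * s) * ξ1) + ((-2:ℝ) * ξ3 * ξ3 * ξ3 * ξ3⁻¹ * Real.cos (Real.sqrt 2 * ξ3 * s) * t₀) + ((1:ℝ) * (Real.sqrt 2)⁻¹ * ξ3 * ξ3 * ξ3⁻¹ * Real.sin (Real.sqrt 2 * ξ3 * s) * ξ4) + (((-1:ℝ)/2) * Real.sqrt 2 * ξ3 * ξ3 * ξ3⁻¹ * Real.sin (Real.sqrt 2 * ξ3 * s) * ξ4) + (((1:ℝ)/2)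 * Real.sqrt 2 * Real.sqrt 2 * (Real.sqrt 2)⁻¹ * ξ3 * ξ3 * ξ3⁻¹ * Real.sin (Real.sqrt 2 * ξ3 * s) * ξ4)) * hr + (((2:ℝ) * ξ3 * ξ1) + ((-4:ℝ) * ξ3 * ξ3 * Real.cos (Real.sqrt 2 * ξ3 * s) * t₀)) * h3 + (((-1:ℝ) * Real.sqrt 2 * ξ3 * ξ3 * ξ3⁻¹ * Real.sin (Real.sqrt 2 * ξ3 * s) * ξ4) + (((-1:ℝ)/2) * Real.sqrt 2 * Real.sqrt 2 * Real.sqrt 2 * ξ3 * ξ3 * ξ3⁻¹ * Real.sin (Real.sqrt 2 * ξ3 * s) * ξ4)) * hir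
  · rw [hx]
    simp
    try ring
  · rw [hy]
    simp
    right
    ring
  · rw [hz]
    simp
    try ring
  · rw [ht]
    simp
    try ring
  · rw [hdx 0]
    unfold canonF
    simp
    linear_combination (((1:ℝ) * ξ3 * ξ3⁻¹ * ξ1) + ((-1:ℝ) * ξ3 * ξ3 * ξ3⁻¹ * t₀)) * hr + (((2:ℝ) * ξ1) + ((-2:ℝ) * ξ3 * t₀)) * h3
  · rw [hdy 0]
    unfold canonF
    simp
    linear_combination ((((-1:ℝ)/4) * ξ3 * ξ3⁻¹ * ξ3⁻¹ * ξ4 * ξ4) + (((-1:ℝ)/2) * ξ3 * ξ3⁻¹ * ξ3⁻¹ * ξ1 * ξ1) + ((2:ℝ) * ξ3 * ξ3 * ξ3⁻¹ * ξ3⁻¹ * ξ1 * t₀) + (((-3:ℝ)/2) * ξ3 * ξ3 * ξ3 * ξ3⁻¹ * ξ3⁻¹ * t₀ * t₀) + (((1:ℝ)/4) * Real.sqrt 2 * (Real.sqrt 2)⁻¹ * ξ3 * ξ3⁻¹ * ξ3⁻¹ * ξ4 * ξ4) + (((-1:ℝ)/2) * Real.sqrt 2 * (Real.sqrt 2)⁻¹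 * ξ3 * ξ3⁻¹ * ξ3⁻¹ * ξ1 * ξ1) + ((1:ℝ) * Real.sqrt 2 * (Real.sqrt 2)⁻¹ * ξ3 * ξ3 * ξ3⁻¹ * ξ3⁻¹ * ξ1 * t₀) + (((-1:ℝ)/2) * Real.sqrt 2 * (Real.sqrt 2)⁻¹ * ξ3 * ξ3 * ξ3 * ξ3⁻¹ * ξ3⁻¹ * t₀ * t₀)) * hr + (((4:ℝ) * ξ1 * t₀) + (((-1:ℝ)/2) * ξ3⁻¹ * ξ4 * ξ4) + ((-1:ℝ) * ξ3⁻¹ * ξ1 * ξ1) + ((-3:ℝ) * ξ3 * t₀ * t₀) + ((4:ℝ) * ξ3 * ξ3⁻¹ * ξ1 * t₀) + ((-3:ℝ) * ξ3 * ξ3 * ξ3⁻¹ * t₀ * t₀)) * h3 + ((((-1:ℝ)/4) * Real.sqrt 2 * Real.sqrt 2 * ξ3 * ξ3⁻¹ * ξ3⁻¹ * ξ4 * ξ4) + (((1:ℝ)/2) * Real.sqrt 2 * Real.sqrt 2 * ξ3 * ξ3⁻¹ * ξ3⁻¹ * ξ1 * ξ1) + ((-1:ℝ) * Real.sqrt 2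 * Real.sqrt 2 * ξ3 * ξ3 * ξ3⁻¹ * ξ3⁻¹ * ξ1 * t₀) + (((1:ℝ)/2) * Real.sqrt 2 * Real.sqrt 2 * ξ3 * ξ3 * ξ3 * ξ3⁻¹ * ξ3⁻¹ * t₀ * t₀)) * hir
  · rw [hdz 0]
    unfold canonF
    simp
    try linear_combination 0
  · rw [hdt 0]
    unfold canonF
    simp
    linear_combination ((((1:ℝ)/2) * ξ3 * ξ3⁻¹ * ξ4) + (((-1:ℝ)/2) * Real.sqrt 2 * (Real.sqrt 2)⁻¹ * ξ3 * ξ3⁻¹ * ξ4)) * hr + (((1:ℝ) * ξ4)) * h3 + ((((1:ℝ)/2) * Real.sqrt 2 * Real.sqrt 2 * ξ3 * ξ3⁻¹ * ξ4)) * hir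
end

section
/- Let x₀, y₀, z₀, t₀, ξ¹, ξ², ξ⁴ be real numbers. Define x(s) = x₀ + ξ¹s, y(s) = y₀ + ξ²s + ξ¹ξ⁴s², z(s) = z₀, t(s) = t₀ + ξ⁴s. Then (x, y, z, t) satisfies the basic anti-Mach geodesic system x″ = 2z′t′, y″ = 2x′t′, z″ = 0, t″ = 2t(z′)² − 2x′z′ on all of ℝ, with x(0) = x₀, y(0) = y₀, z(0) = z₀, t(0) = t₀, x′(0) = ξ¹, y′(0) = ξ², z′(0) = 0, t′(0) = ξ⁴. -/
private lemma deriv_lin (a b : ℝ) : deriv (fun s : ℝ => a + b * s) = fun _ => b := by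
  funext s
  have : HasDerivAt (fun s : ℝ => a + b * s) b s := by
    simpa using ((hasDerivAt_id s).const_mul b).const_add a
  exact this.deriv

private lemma deriv_quad (a b c : ℝ) :
    deriv (fun s : ℝ => a + b * s + c * s ^ 2) = fun s => b + c * (2 * s) := by
  funext s
  have : HasDerivAt (fun s : ℝ => a + b * s + c * s ^ 2) (b + c * (2 * s)) s := by
    have h1 : HasDerivAt (fun s : ℝ => a + b * s) b s := by
      simpa using ((hasDerivAt_id s).const_mul b).const_add a
    have h2 : HasDerivAt (fun s : ℝ => c * s ^ 2) (c * (2 * s)) s := by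
      simpa using (hasDerivAt_pow 2 s).const_mul c
    exact h1.add h2
  exact this.deriv

/-- Explicit solution of the basic anti-Mach geodesic system in the case ξ³ = 0. -/
theorem antiMach_geodesic_solution_base_xi3_zero (x₀ y₀ z₀ t₀ ξ1 ξ2 ξ4 : ℝ)
    (x y z t : ℝ → ℝ)
    (hx : ∀ s, x s = x₀ + ξ1 * s)
    (hy : ∀ s, y s = y₀ + ξ2 * s + ξ1 * ξ4 * s ^ 2)
    (hz : ∀ s, z s = z₀)
    (ht : ∀ s, t s = t₀ + ξ4 * s) :
    (∀ s, deriv (deriv x) s = 2 * deriv z s * deriv t s) ∧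
    (∀ s, deriv (deriv y) s = 2 * deriv x s * deriv t s) ∧
    (∀ s, deriv (deriv z) s = 0) ∧
    (∀ s, deriv (deriv t) s = 2 * t s * (deriv z s) ^ 2 - 2 * deriv x s * deriv z s) ∧
    x 0 = x₀ ∧ y 0 = y₀ ∧ z 0 = z₀ ∧ t 0 = t₀ ∧
    deriv x 0 = ξ1 ∧ deriv y 0 = ξ2 ∧ deriv z 0 = 0 ∧ deriv t 0 = ξ4 := by
  have hxe : x = fun s => x₀ + ξ1 * s := funext hx
  have hye : y = fun s => y₀ + ξ2 * s + ξ1 * ξ4 * s ^ 2 := funext hy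
  have hze : z = fun _ => z₀ := funext hz
  have hte : t = fun s => t₀ + ξ4 * s := funext ht
  subst hxe hye hze hte
  rw [deriv_lin, deriv_lin, deriv_quad, deriv_const']
  have hdy : deriv (fun s : ℝ => ξ2 + ξ1 * ξ4 * (2 * s)) = fun _ => ξ1 * ξ4 * 2 := by
    have : (fun s : ℝ => ξ2 + ξ1 * ξ4 * (2 * s)) = fun s : ℝ => ξ2 + (ξ1 * ξ4 * 2) * s := by
      funext s; ring
    rw [this, deriv_lin]
  rw [hdy]
  simp
  ring
end

section
/- Let x₀, y₀, z₀, t₀, ξ¹, ξ², ξ⁴, P₀, Q₀, U₀, V₀, h₁, h₂, h₃, h₄ be real numbers. Define x(s) = x₀ + ξ¹s, y(s) = y₀ + ξ²s + ξ¹ξ⁴s², z(s) = z₀, t(s) = t₀ + ξ⁴s, P(s) = P₀ + h₁s − ξ⁴h₂s², Q(s) = Q₀ + h₂s, U(s) = U₀ + h₃s − (ξ⁴h₁ − ξ¹h₄)s² + (2/3)h₂((ξ⁴)² − (ξ¹)²)s³, V(s) = V₀ + h₄s − ξ¹h₂s². Then the eight functions satisfy the full geodesic system of the Riemann extension of the anti-Mach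 metric: x″ = 2z′t′, y″ = 2x′t′, z″ = 0, t″ = 2t(z′)² − 2x′z′, P″ = 4Q z′(x′ − t z′) − 2t′Q′ + 2z′V′, Q″ = 0, U″ = 4P z′(x′ − t z′) − 2t′P′ + 2(x′ − 2t z′)V′, V″ = 2V(z′)² − 4Q z′t′ − 2z′P′ − 2x′Q′ on all of ℝ, with initial values x(0)=x₀, y(0)=y₀, z(0)=z₀, t(0)=t₀, P(0)=P₀, Q(0)=Q₀, U(0)=U₀, V(0)=V₀ and initial derivatives x′(0)=ξ¹, y′(0)=ξ², z′(0)=0, t′(0)=ξ⁴, P′(0)=h₁, Q′(0)=h₂, U′(0)=h₃, V′(0)=h₄. -/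
lemma cubic_hasDerivAt (a b c d s : ℝ) :
    HasDerivAt (fun s : ℝ => a + b*s + c*s^2 + d*s^3) (b + 2*c*s + 3*d*s^2) s := by
  have h : HasDerivAt (fun s : ℝ => a + b*s + c*s^2 + d*s^3)
      (0 + b*1 + c*(↑2*s^1) + d*(↑3*s^2)) s :=
    (((hasDerivAt_const s a).add ((hasDerivAt_id s).const_mul b)).add
      ((hasDerivAt_pow 2 s).const_mul c)).add ((hasDerivAt_pow 3 s).const_mul d)
  convert h using 1
  ring

lemma cubic_deriv (a b c d : ℝ) :
    deriv (fun s : ℝ => a + b*s + c*s^2 + d*s^3) = fun s => b + 2*c*s + 3*d*s^2 := by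
  funext s
  exact (cubic_hasDerivAt a b c d s).deriv

lemma cubic_deriv2 (a b c d : ℝ) :
    deriv (deriv (fun s : ℝ => a + b*s + c*s^2 + d*s^3)) = fun s => 2*c + 6*d*s := by
  rw [cubic_deriv]
  have h : (fun s : ℝ => b + 2*c*s + 3*d*s^2)
      = fun s : ℝ => b + (2*c)*s + (3*d)*s^2 + 0*s^3 := by funext s; ring
  rw [h, cubic_deriv]
  funext s; ring

/-- Explicit solution of the full geodesic system of the Riemann extension of the anti-Mach
metric in the case ξ³ = 0. -/
theorem antiMach_extension_geodesic_solution_xi3_zero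
    (x₀ y₀ z₀ t₀ ξ1 ξ2 ξ4 P₀ Q₀ U₀ V₀ h₁ h₂ h₃ h₄ : ℝ)
    (x y z t P Q U V : ℝ → ℝ)
    (hx : ∀ s, x s = x₀ + ξ1 * s)
    (hy : ∀ s, y s = y₀ + ξ2 * s + ξ1 * ξ4 * s ^ 2)
    (hz : ∀ s, z s = z₀)
    (ht : ∀ s, t s = t₀ + ξ4 * s)
    (hP : ∀ s, P s = P₀ + h₁ * s - ξ4 * h₂ * s ^ 2)
    (hQ : ∀ s, Q s = Q₀ + h₂ * s)
    (hU : ∀ s, U s = U₀ + h₃ * s - (ξ4 * h₁ - ξ1 * h₄) * s ^ 2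
      + (2 / 3) * h₂ * (ξ4 ^ 2 - ξ1 ^ 2) * s ^ 3)
    (hV : ∀ s, V s = V₀ + h₄ * s - ξ1 * h₂ * s ^ 2) :
    (∀ s, deriv (deriv x) s = 2 * deriv z s * deriv t s) ∧
    (∀ s, deriv (deriv y) s = 2 * deriv x s * deriv t s) ∧
    (∀ s, deriv (deriv z) s = 0) ∧
    (∀ s, deriv (deriv t) s = 2 * t s * (deriv z s) ^ 2 - 2 * deriv x s * deriv z s) ∧
    (∀ s, deriv (deriv P) s
      = 4 * Q s * deriv z s * (deriv x s - t s * deriv z s)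
        - 2 * deriv t s * deriv Q s + 2 * deriv z s * deriv V s) ∧
    (∀ s, deriv (deriv Q) s = 0) ∧
    (∀ s, deriv (deriv U) s
      = 4 * P s * deriv z s * (deriv x s - t s * deriv z s)
        - 2 * deriv t s * deriv P s + 2 * (deriv x s - 2 * t s * deriv z s) * deriv V s) ∧
    (∀ s, deriv (deriv V) s
      = 2 * V s * (deriv z s) ^ 2 - 4 * Q s * deriv z s * deriv t s
        - 2 * deriv z s * deriv P s - 2 * deriv x s * deriv Q s) ∧
    x 0 = x₀ ∧ y 0 = y₀ ∧ z 0 = z₀ ∧ t 0 = t₀ ∧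
    P 0 = P₀ ∧ Q 0 = Q₀ ∧ U 0 = U₀ ∧ V 0 = V₀ ∧
    deriv x 0 = ξ1 ∧ deriv y 0 = ξ2 ∧ deriv z 0 = 0 ∧ deriv t 0 = ξ4 ∧
    deriv P 0 = h₁ ∧ deriv Q 0 = h₂ ∧ deriv U 0 = h₃ ∧ deriv V 0 = h₄ := by
  have hx' : x = fun s => x₀ + ξ1*s + 0*s^2 + 0*s^3 := by funext s; rw [hx]; ring
  have hy' : y = fun s => y₀ + ξ2*s + (ξ1*ξ4)*s^2 + 0*s^3 := by funext s; rw [hy]; ring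
  have hz' : z = fun s => z₀ + 0*s + 0*s^2 + 0*s^3 := by funext s; rw [hz]; ring
  have ht' : t = fun s => t₀ + ξ4*s + 0*s^2 + 0*s^3 := by funext s; rw [ht]; ring
  have hP' : P = fun s => P₀ + h₁*s + (-(ξ4*h₂))*s^2 + 0*s^3 := by funext s; rw [hP]; ring
  have hQ' : Q = fun s => Q₀ + h₂*s + 0*s^2 + 0*s^3 := by funext s; rw [hQ]; ring
  have hU' : U = fun s => U₀ + h₃*s + (-(ξ4*h₁ - ξ1*h₄))*s^2
      + ((2/3)*h₂*(ξ4^2 - ξ1^2))*s^3 := by funext s; rw [hU]; ring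
  have hV' : V = fun s => V₀ + h₄*s + (-(ξ1*h₂))*s^2 + 0*s^3 := by funext s; rw [hV]; ring
  subst hx' hy' hz' ht' hP' hQ' hU' hV'
  simp only [cubic_deriv2]
  simp only [cubic_deriv]
  and_intros <;> first
    | (intro s; ring)
    | norm_num
end

section
/- Let f, g, G₁, G₂ : ℝ → ℝ be twice differentiable and let C₃, C₄, C₅ ∈ ℝ. Define on ℝ² the functions x(u,v) = f(u)² + C₃f(u) + C₄ − g(v)² − C₃g(v) + C₅, y(u,v) = −2C₃f(u)g(v) − f(u)²g(v) − g(v)²f(u) + G₁(u) + G₂(v), z(u,v) = f(u) + g(v), t(u,v) = f(u) − g(v). Then (x, y, z, t) satisfies the translation-surface system of the anti-Mach metric for all (u,v) ∈ ℝ²: ∂²x/∂u∂v − (∂z/∂u)(∂t/∂v) − (∂t/∂u)(∂z/∂v) = 0; ∂²y/∂u∂v − (∂x/∂u)(∂t/∂v) − (∂t/∂u)(∂x/∂v) = 0; ∂²z/∂u∂v = 0; ∂²t/∂u∂v + (∂x/∂u)(∂z/∂v) + (∂z/∂u)(∂x/∂v) − 2t·(∂z/∂u)(∂z/∂v) = 0.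 Moreover each of x, z, t is a sum of a function of u alone and a function of v alone, so the orthogonal projection to the 3-dimensional (x, z, t)-space is a translation surface. -/
/-- The explicit family x = f² + C₃f + C₄ − g² − C₃g + C₅, y = −2C₃fg − f²g − g²f + G₁ + G₂,
z = f + g, t = f − g solves the translation-surface system of the anti-Mach metric, and the
coordinates x, z, t are each a sum of a function of u alone and a function of v alone (so the
projection to (x,z,t)-space is a translation surface). -/
theorem antiMach_translation_surface_solution (f g G₁ G₂ : ℝ → ℝ) (C₃ C₄ C₅ : ℝ)
    (hf : Differentiable ℝ f) (hf' : Differentiable ℝ (deriv f))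
    (hg : Differentiable ℝ g) (hg' : Differentiable ℝ (deriv g))
    (hG₁ : Differentiable ℝ G₁) (hG₁' : Differentiable ℝ (deriv G₁))
    (hG₂ : Differentiable ℝ G₂) (hG₂' : Differentiable ℝ (deriv G₂))
    (X Y Z T : ℝ → ℝ → ℝ)
    (hX : ∀ u v, X u v = (f u) ^ 2 + C₃ * f u + C₄ - (g v) ^ 2 - C₃ * g v + C₅)
    (hY : ∀ u v, Y u v = -2 * C₃ * f u * g v - (f u) ^ 2 * g v - (g v) ^ 2 * f u
      + G₁ u + G₂ v)
    (hZ : ∀ u v, Z u v = f u + g v)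
    (hT : ∀ u v, T u v = f u - g v) :
    (∀ u v, deriv (fun u' => deriv (fun v' => X u' v') v) u
      - deriv (fun u' => Z u' v) u * deriv (fun v' => T u v') v
      - deriv (fun u' => T u' v) u * deriv (fun v' => Z u v') v = 0) ∧
    (∀ u v, deriv (fun u' => deriv (fun v' => Y u' v') v) u
      - deriv (fun u' => X u' v) u * deriv (fun v' => T u v') v
      - deriv (fun u' => T u' v) u * deriv (fun v' => X u v') v = 0) ∧
    (∀ u v, deriv (fun u' => deriv (fun v' => Z u' v') v) u = 0) ∧
    (∀ u v, deriv (fun u' => deriv (fun v' => T u' v') v) u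
      + deriv (fun u' => X u' v) u * deriv (fun v' => Z u v') v
      + deriv (fun u' => Z u' v) u * deriv (fun v' => X u v') v
      - 2 * T u v * deriv (fun u' => Z u' v) u * deriv (fun v' => Z u v') v = 0) ∧
    (∃ F G : ℝ → ℝ, ∀ u v, X u v = F u + G v) ∧
    (∃ F G : ℝ → ℝ, ∀ u v, Z u v = F u + G v) ∧
    (∃ F G : ℝ → ℝ, ∀ u v, T u v = F u + G v) := by
  have Hf : ∀ u, HasDerivAt f (deriv f u) u := fun u => (hf u).hasDerivAt
  have Hg : ∀ v, HasDerivAt g (deriv g v) v := fun v => (hg v).hasDerivAt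
  have HG₂ : ∀ v, HasDerivAt G₂ (deriv G₂ v) v := fun v => (hG₂ v).hasDerivAt
  -- first derivatives
  have dXu : ∀ u v, deriv (fun u' => X u' v) u = 2 * f u * deriv f u + C₃ * deriv f u := by
    intro u v
    simp only [hX]
    have h : HasDerivAt
        (fun u' => (f u') ^ 2 + C₃ * f u' + C₄ - (g v) ^ 2 - C₃ * g v + C₅)
        ((2 : ℕ) * f u ^ (2 - 1) * deriv f u + C₃ * deriv f u) u := by
      exact (((((Hf u).pow 2).add ((Hf u).const_mul C₃)).add_const C₄ |>.sub_const
        ((g v) ^ 2)).sub_const (C₃ * g v)).add_const C₅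
    rw [h.deriv]; push_cast; ring
  have dXv : ∀ u v, deriv (fun v' => X u v') v = -(2 * g v * deriv g v) - C₃ * deriv g v := by
    intro u v
    simp only [hX]
    have h : HasDerivAt
        (fun v' => (f u) ^ 2 + C₃ * f u + C₄ - (g v') ^ 2 - C₃ * g v' + C₅)
        (-((2 : ℕ) * g v ^ (2 - 1) * deriv g v) - C₃ * deriv g v) v := by
      exact ((((Hg v).pow 2).const_sub ((f u) ^ 2 + C₃ * f u + C₄)).sub
        ((Hg v).const_mul C₃)).add_const C₅
    rw [h.deriv]; push_cast; ring
  have dZu : ∀ u v, deriv (fun u' => Z u' v) u = deriv f u := by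
    intro u v
    simp only [hZ]
    exact ((Hf u).add_const (g v)).deriv
  have dZv : ∀ u v, deriv (fun v' => Z u v') v = deriv g v := by
    intro u v
    simp only [hZ]
    exact ((Hg v).const_add (f u)).deriv
  have dTu : ∀ u v, deriv (fun u' => T u' v) u = deriv f u := by
    intro u v
    simp only [hT]
    exact ((Hf u).sub_const (g v)).deriv
  have dTv : ∀ u v, deriv (fun v' => T u v') v = -deriv g v := by
    intro u v
    simp only [hT]
    have h := (Hg v).const_sub (f u)
    rw [h.deriv]
  -- mixed second derivatives
  have mX : ∀ u v, deriv (fun u' => deriv (fun v' => X u' v') v) u = 0 := by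
    intro u v
    rw [show (fun u' => deriv (fun v' => X u' v') v)
        = (fun _ : ℝ => -(2 * g v * deriv g v) - C₃ * deriv g v) from
      funext fun u' => dXv u' v]
    exact deriv_const u _
  have mZ : ∀ u v, deriv (fun u' => deriv (fun v' => Z u' v') v) u = 0 := by
    intro u v
    rw [show (fun u' => deriv (fun v' => Z u' v') v) = (fun _ : ℝ => deriv g v) from
      funext fun u' => dZv u' v]
    exact deriv_const u _
  have mT : ∀ u v, deriv (fun u' => deriv (fun v' => T u' v') v) u = 0 := by
    intro u v
    rw [show (fun u' => deriv (fun v' => T u' v') v) = (fun _ : ℝ => -deriv g v) from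
      funext fun u' => dTv u' v]
    exact deriv_const u _
  have dYv : ∀ u v, deriv (fun v' => Y u v') v
      = -2 * C₃ * f u * deriv g v - f u ^ 2 * deriv g v
        - 2 * g v * deriv g v * f u + deriv G₂ v := by
    intro u v
    simp only [hY]
    have h : HasDerivAt
        (fun v' => -2 * C₃ * f u * g v' - (f u) ^ 2 * g v' - (g v') ^ 2 * f u + G₁ u + G₂ v')
        ((((-2 * C₃ * f u) * deriv g v - (f u) ^ 2 * deriv g v)
          - ((2 : ℕ) * g v ^ (2 - 1) * deriv g v) * f u) + deriv G₂ v) v := by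
      exact (((((Hg v).const_mul (-2 * C₃ * f u)).sub ((Hg v).const_mul ((f u) ^ 2))).sub
        (((Hg v).pow 2).mul_const (f u))).add_const (G₁ u)).add (HG₂ v)
    rw [h.deriv]; push_cast; ring
  have mY : ∀ u v, deriv (fun u' => deriv (fun v' => Y u' v') v) u
      = -2 * C₃ * deriv f u * deriv g v - 2 * f u * deriv f u * deriv g v
        - 2 * g v * deriv g v * deriv f u := by
    intro u v
    rw [show (fun u' => deriv (fun v' => Y u' v') v)
        = (fun u' => -2 * C₃ * f u' * deriv g v - f u' ^ 2 * deriv g v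
            - 2 * g v * deriv g v * f u' + deriv G₂ v) from
      funext fun u' => dYv u' v]
    have h : HasDerivAt
        (fun u' => -2 * C₃ * f u' * deriv g v - f u' ^ 2 * deriv g v
            - 2 * g v * deriv g v * f u' + deriv G₂ v)
        ((((-2 * C₃) * deriv f u) * deriv g v
          - ((2 : ℕ) * f u ^ (2 - 1) * deriv f u) * deriv g v
          - (2 * g v * deriv g v) * deriv f u)) u := by
      exact (((((Hf u).const_mul (-2 * C₃)).mul_const (deriv g v)).sub
        (((Hf u).pow 2).mul_const (deriv g v))).sub
        ((Hf u).const_mul (2 * g v * deriv g v))).add_const (deriv G₂ v)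
    rw [h.deriv]; push_cast; ring
  refine ⟨?_, ?_, ?_, ?_, ?_, ?_, ?_⟩
  · intro u v
    rw [mX, dZu, dTv, dTu, dZv]; ring
  · intro u v
    rw [mY, dXu, dTv, dTu, dXv]; ring
  · intro u v
    exact mZ u v
  · intro u v
    rw [mT, dXu, dZv, dZu, dXv, hT]; ring
  · exact ⟨fun u => (f u) ^ 2 + C₃ * f u + C₄,
      fun v => -(g v) ^ 2 - C₃ * g v + C₅, fun u v => by rw [hX]; ring⟩
  · exact ⟨f, g, hZ⟩
  · exact ⟨f, fun v => -g v, fun u v => by rw [hT]; ring⟩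
end

section
/- Let f, g, x₁, x₂ : ℝ → ℝ be differentiable with f′(u) ≠ 0 and g′(v) ≠ 0 for all u, v ∈ ℝ, and suppose that for all (u,v) ∈ ℝ²: x₁′(u)·g′(v) + x₂′(v)·f′(u) − 2(f(u) − g(v))·f′(u)·g′(v) = 0. Then there exist constants C₃, C₄, C₅ ∈ ℝ such that x₁(u) = f(u)² + C₃f(u) + C₄ for all u and x₂(v) = −g(v)² − C₃g(v) + C₅ for all v. -/
/-- Separation of variables for translation surfaces of the anti-Mach metric: if
x₁′g′ + x₂′f′ − 2(f − g)f′g′ = 0 identically, with f′ and g′ nowhere vanishing, then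
x₁ = f² + C₃f + C₄ and x₂ = −g² − C₃g + C₅ for some constants C₃, C₄, C₅. -/
theorem antiMach_translation_surface_separation (f g x₁ x₂ : ℝ → ℝ)
    (hf : Differentiable ℝ f) (hg : Differentiable ℝ g)
    (hx₁ : Differentiable ℝ x₁) (hx₂ : Differentiable ℝ x₂)
    (hf' : ∀ u, deriv f u ≠ 0) (hg' : ∀ v, deriv g v ≠ 0)
    (heq : ∀ u v, deriv x₁ u * deriv g v + deriv x₂ v * deriv f u
      - 2 * (f u - g v) * deriv f u * deriv g v = 0) :
    ∃ C₃ C₄ C₅ : ℝ,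
      (∀ u, x₁ u = (f u) ^ 2 + C₃ * f u + C₄) ∧
      (∀ v, x₂ v = -(g v) ^ 2 - C₃ * g v + C₅) := by
  set C₃ : ℝ := -(2 * g 0) - deriv x₂ 0 / deriv g 0 with hC₃
  have key1 : ∀ u, deriv x₁ u = (2 * f u + C₃) * deriv f u := by
    intro u
    have h := heq u 0
    have hg0 := hg' 0
    rw [hC₃]
    field_simp
    linear_combination h
  have key2 : ∀ v, deriv x₂ v = (-(2 * g v) - C₃) * deriv g v := by
    intro v
    have h := heq 0 v
    have k := key1 0
    have hf0 := hf' 0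
    have hg0 := hg' 0
    have h2 : deriv x₂ v * deriv f 0 = ((-(2 * g v) - C₃) * deriv g v) * deriv f 0 := by
      rw [hC₃] at k ⊢
      field_simp at k ⊢
      refine mul_right_cancel₀ hf0 ?_
      linear_combination deriv g 0 * h - deriv g v * k
    exact mul_right_cancel₀ hf0 h2
  have d1 : Differentiable ℝ (fun u => x₁ u - ((f u) ^ 2 + C₃ * f u)) := by
    fun_prop
  have d2 : Differentiable ℝ (fun v => x₂ v + ((g v) ^ 2 + C₃ * g v)) := by
    fun_prop
  have c1 : ∀ u, x₁ u - ((f u) ^ 2 + C₃ * f u) = x₁ 0 - ((f 0) ^ 2 + C₃ * f 0) := by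
    intro u
    refine is_const_of_deriv_eq_zero d1 (fun x => ?_) u 0
    have hd : HasDerivAt (fun u => x₁ u - ((f u) ^ 2 + C₃ * f u))
        (deriv x₁ x - ((2 : ℕ) * f x ^ 1 * deriv f x + C₃ * deriv f x)) x :=
      (hx₁ x).hasDerivAt.sub
        (((hf x).hasDerivAt.pow 2).add ((hf x).hasDerivAt.const_mul C₃))
    rw [hd.deriv, key1 x]
    push_cast
    ring
  have c2 : ∀ v, x₂ v + ((g v) ^ 2 + C₃ * g v) = x₂ 0 + ((g 0) ^ 2 + C₃ * g 0) := by
    intro v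
    refine is_const_of_deriv_eq_zero d2 (fun x => ?_) v 0
    have hd : HasDerivAt (fun v => x₂ v + ((g v) ^ 2 + C₃ * g v))
        (deriv x₂ x + ((2 : ℕ) * g x ^ 1 * deriv g x + C₃ * deriv g x)) x :=
      (hx₂ x).hasDerivAt.add
        (((hg x).hasDerivAt.pow 2).add ((hg x).hasDerivAt.const_mul C₃))
    rw [hd.deriv, key2 x]
    push_cast
    ring
  refine ⟨C₃, x₁ 0 - ((f 0) ^ 2 + C₃ * f 0), x₂ 0 + ((g 0) ^ 2 + C₃ * g 0),
    fun u => by linarith [c1 u], fun v => by linarith [c2 v]⟩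
end
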